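/- Let φ_1, φ_2, φ_3 ∈ ℝ with φ_0 := 0, and consider the element T = −Σ ε_{αβγδ} cos(φ_α − φ_β + φ_γ − φ_δ) x^α ⊗ x^β ⊗ x^γ ⊗ x^δ + i Σ_{μ,ν} sin(2(φ_μ − φ_ν)) x^μ ⊗ x^ν ⊗ x^μ ⊗ x^ν of the 4-fold tensor power of the free vector space on symbols x^0, x^1, x^2, x^3 (indices range over 0,...,3, ε completely antisymmetric with ε_{0123} = 1). Then T = 0 if and only if (cos(φ_α − φ_β + φ_γ − φ_δ) = 0 for all permutations (α,β,γ,δ) of (0,1,2,3) and sin(2(φ_μ − φ_ν)) = 0 for all μ,ν); in particular T = 0 when φ_1 = φ_2 = φ_3 = π/2, and also when φ_1 = π/2, φ_2 = φ_3 = 0, while T ≠ 0 when φ_1 = φ_2 = φ_3 = 0. -/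

import Mathlib

/-!
The tensors `x^α ⊗ x^β ⊗ x^γ ⊗ x^δ` form a basis, so `T = 0` iff every coordinate vanishes.
When the four indices are distinct the coordinate is `-ε_{αβγδ} cos(…)` with `ε = ±1`; otherwise
`ε = 0` and only the term `i sin(2(φ_μ - φ_ν))` at `(μ, ν, μ, ν)` survives.

For `φ = (π/2) n` with `n` integral every `2(φ_μ - φ_ν)` is a multiple of `π`, and
`n_α - n_β + n_γ - n_δ` has the parity of `∑ n` for every permutation, so all cosines vanish
as soon as `∑ n` is odd; `n = (0,1,1,1)` and `n = (0,1,0,0)` are the two vanishing cases.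
At `φ = 0` the coordinate of `x⁰ ⊗ x¹ ⊗ x² ⊗ x³` is `-1`.
-/

set_option synthInstance.maxHeartbeats 1000000
set_option maxHeartbeats 1000000

open Complex Real Matrix
open scoped TensorProduct

/-- The completely antisymmetric symbol on four indices, with ε₀₁₂₃ = 1. -/
def epsFour (a b c d : Fin 4) : ℤ :=
  if a = b ∨ a = c ∨ a = d ∨ b = c ∨ b = d ∨ c = d then 0
  else (if a < b then 1 else -1) * (if a < c then 1 else -1) * (if a < d then 1 else -1)
    * (if b < c then 1 else -1) * (if b < d then 1 else -1) * (if c < d then 1 else -1)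

/-- The basis vector x^μ of the free vector space on the symbols x⁰,…,x³. -/
noncomputable def xBasis (μ : Fin 4) : Fin 4 → ℂ := Pi.single μ 1

/-- The element ch̃_{3/2}(U_u) of the 4-fold tensor power, formula (aan) of the paper,
with φ₀ = 0 and φ = ![0, φ₁, φ₂, φ₃]. -/
noncomputable def chT (φ₁ φ₂ φ₃ : ℝ) :
    (Fin 4 → ℂ) ⊗[ℂ] ((Fin 4 → ℂ) ⊗[ℂ] ((Fin 4 → ℂ) ⊗[ℂ] (Fin 4 → ℂ))) :=
  (∑ α : Fin 4, ∑ β : Fin 4, ∑ γ : Fin 4, ∑ δ : Fin 4,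
      (-(epsFour α β γ δ : ℂ) *
          (Real.cos (![0, φ₁, φ₂, φ₃] α - ![0, φ₁, φ₂, φ₃] β
            + ![0, φ₁, φ₂, φ₃] γ - ![0, φ₁, φ₂, φ₃] δ) : ℂ)) •
        (xBasis α ⊗ₜ[ℂ] (xBasis β ⊗ₜ[ℂ] (xBasis γ ⊗ₜ[ℂ] xBasis δ))))
  + I • (∑ μ : Fin 4, ∑ ν : Fin 4,
      ((Real.sin (2 * (![0, φ₁, φ₂, φ₃] μ - ![0, φ₁, φ₂, φ₃] ν)) : ℂ)) •
        (xBasis μ ⊗ₜ[ℂ] (xBasis ν ⊗ₜ[ℂ] (xBasis μ ⊗ₜ[ℂ] xBasis ν))))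

theorem epsFour_ne_zero_iff (a b c d : Fin 4) :
    epsFour a b c d ≠ 0 ↔ Function.Injective ![a, b, c, d] := by
  revert a b c d; decide

theorem forall_bijective_fin_four_iff {P : Fin 4 → Fin 4 → Fin 4 → Fin 4 → Prop} :
    (∀ a : Fin 4 → Fin 4, Function.Bijective a → P (a 0) (a 1) (a 2) (a 3)) ↔
      ∀ a b c d : Fin 4, Function.Injective ![a, b, c, d] → P a b c d := by
  refine ⟨fun h a b c d hinj => h _ (Finite.injective_iff_bijective.1 hinj), fun h a ha => ?_⟩
  have ha' : ![a 0, a 1, a 2, a 3] = a := by ext i; fin_cases i <;> rfl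
  exact h _ _ _ _ (ha' ▸ ha.injective)

theorem odd_alternating_sum_iff (n : Fin 4 → ℤ) {a : Fin 4 → Fin 4} (ha : Function.Bijective a) :
    Odd (n (a 0) - n (a 1) + n (a 2) - n (a 3)) ↔ Odd (∑ i, n i) := by
  rw [← ha.sum_comp n, Fin.sum_univ_four, Int.odd_iff, Int.odd_iff]
  omega

noncomputable def xTensorBasis : Module.Basis (Fin 4 × Fin 4 × Fin 4 × Fin 4) ℂ
    ((Fin 4 → ℂ) ⊗[ℂ] ((Fin 4 → ℂ) ⊗[ℂ] ((Fin 4 → ℂ) ⊗[ℂ] (Fin 4 → ℂ)))) :=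
  (Pi.basisFun ℂ (Fin 4)).tensorProduct ((Pi.basisFun ℂ (Fin 4)).tensorProduct
    ((Pi.basisFun ℂ (Fin 4)).tensorProduct (Pi.basisFun ℂ (Fin 4))))

theorem xTensorBasis_apply (a b c d : Fin 4) :
    xTensorBasis (a, b, c, d) = xBasis a ⊗ₜ[ℂ] (xBasis b ⊗ₜ[ℂ] (xBasis c ⊗ₜ[ℂ] xBasis d)) := by
  simp [xTensorBasis, Module.Basis.tensorProduct_apply, xBasis, Pi.basisFun_apply]

noncomputable def chTensor (φ : Fin 4 → ℝ) :
    (Fin 4 → ℂ) ⊗[ℂ] ((Fin 4 → ℂ) ⊗[ℂ] ((Fin 4 → ℂ) ⊗[ℂ] (Fin 4 → ℂ))) :=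
  (∑ α : Fin 4, ∑ β : Fin 4, ∑ γ : Fin 4, ∑ δ : Fin 4,
      (-(epsFour α β γ δ : ℂ) * (Real.cos (φ α - φ β + φ γ - φ δ) : ℂ)) •
        (xBasis α ⊗ₜ[ℂ] (xBasis β ⊗ₜ[ℂ] (xBasis γ ⊗ₜ[ℂ] xBasis δ))))
  + I • (∑ μ : Fin 4, ∑ ν : Fin 4, ((Real.sin (2 * (φ μ - φ ν)) : ℂ)) •
        (xBasis μ ⊗ₜ[ℂ] (xBasis ν ⊗ₜ[ℂ] (xBasis μ ⊗ₜ[ℂ] xBasis ν))))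

theorem chT_eq_chTensor (φ₁ φ₂ φ₃ : ℝ) : chT φ₁ φ₂ φ₃ = chTensor ![0, φ₁, φ₂, φ₃] := rfl

theorem xTensorBasis_repr_chTensor (φ : Fin 4 → ℝ) (a b c d : Fin 4) :
    xTensorBasis.repr (chTensor φ) (a, b, c, d) =
      -(epsFour a b c d : ℂ) * (Real.cos (φ a - φ b + φ c - φ d) : ℂ)
        + if a = c ∧ b = d then I * (Real.sin (2 * (φ a - φ b)) : ℂ) else 0 := by
  simp [chTensor, ← xTensorBasis_apply, Finsupp.single_apply, ite_and]

theorem chCoeff_eq_zero_iff {a b c d : Fin 4} {x y : ℝ} :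
    -(epsFour a b c d : ℂ) * (Real.cos x : ℂ)
        + (if a = c ∧ b = d then I * (Real.sin y : ℂ) else 0) = 0 ↔
      (Function.Injective ![a, b, c, d] → Real.cos x = 0) ∧ (a = c ∧ b = d → Real.sin y = 0) := by
  by_cases hinj : Function.Injective ![a, b, c, d]
  · have hac : a ≠ c := hinj.ne (by decide : (0 : Fin 4) ≠ 2)
    have heps : (epsFour a b c d : ℂ) ≠ 0 := by exact_mod_cast (epsFour_ne_zero_iff a b c d).2 hinj
    simp [-Complex.ofReal_cos, hinj, hac, heps]
  · rw [not_ne_iff.1 (mt (epsFour_ne_zero_iff a b c d).1 hinj)]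
    split_ifs with h
    · obtain ⟨rfl, rfl⟩ := h
      simp [-Complex.ofReal_sin, hinj, I_ne_zero]
    · simp [hinj, h]

def ChCoeffsVanish (φ : Fin 4 → ℝ) : Prop :=
  (∀ a : Fin 4 → Fin 4, Function.Bijective a → Real.cos (φ (a 0) - φ (a 1) + φ (a 2) - φ (a 3)) = 0)
    ∧ ∀ μ ν : Fin 4, Real.sin (2 * (φ μ - φ ν)) = 0

theorem chTensor_eq_zero_iff (φ : Fin 4 → ℝ) : chTensor φ = 0 ↔ ChCoeffsVanish φ := by
  simp only [← xTensorBasis.forall_coord_eq_zero_iff, Module.Basis.coord_apply, Prod.forall,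
    xTensorBasis_repr_chTensor, chCoeff_eq_zero_iff, forall_and]
  refine and_congr forall_bijective_fin_four_iff.symm
    ⟨fun h μ ν => h μ ν μ ν ⟨rfl, rfl⟩, ?_⟩
  rintro h a b _ _ ⟨rfl, rfl⟩
  exact h a b

theorem chCoeffsVanish_of_odd (n : Fin 4 → ℤ) (hn : Odd (∑ i, n i)) :
    ChCoeffsVanish (fun i => n i * (π / 2)) := by
  refine ⟨fun a ha => ?_, fun μ ν => ?_⟩
  · obtain ⟨k, hk⟩ := (odd_alternating_sum_iff n ha).2 hn
    refine Real.cos_eq_zero_iff.2 ⟨k, ?_⟩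
    have hk' : (n (a 0) - n (a 1) + n (a 2) - n (a 3) : ℝ) = 2 * k + 1 := by exact_mod_cast hk
    linear_combination (π / 2) * hk'
  · rw [show 2 * (n μ * (π / 2) - n ν * (π / 2)) = ((n μ - n ν : ℤ) : ℝ) * π by push_cast; ring]
    exact Real.sin_int_mul_pi _

/-- chT vanishes iff all its coefficients vanish; in particular it
vanishes for φ = (π/2, π/2, π/2) and φ = (π/2, 0, 0), but not for φ = (0,0,0). -/
theorem stmt_19 (φ₁ φ₂ φ₃ : ℝ) :
    (chT φ₁ φ₂ φ₃ = 0 ↔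
      ((∀ a : Fin 4 → Fin 4, Function.Bijective a →
          Real.cos (![0, φ₁, φ₂, φ₃] (a 0) - ![0, φ₁, φ₂, φ₃] (a 1)
            + ![0, φ₁, φ₂, φ₃] (a 2) - ![0, φ₁, φ₂, φ₃] (a 3)) = 0) ∧
       (∀ μ ν : Fin 4,
          Real.sin (2 * (![0, φ₁, φ₂, φ₃] μ - ![0, φ₁, φ₂, φ₃] ν)) = 0))) ∧
    chT (π/2) (π/2) (π/2) = 0 ∧
    chT (π/2) 0 0 = 0 ∧
    chT 0 0 0 ≠ 0 := by
  have hφ₁ : (![0, π/2, π/2, π/2] : Fin 4 → ℝ) = fun i => (![0, 1, 1, 1] i : ℤ) * (π / 2) := by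
    ext i; fin_cases i <;> simp
  have hφ₂ : (![0, π/2, 0, 0] : Fin 4 → ℝ) = fun i => (![0, 1, 0, 0] i : ℤ) * (π / 2) := by
    ext i; fin_cases i <;> simp
  refine ⟨chTensor_eq_zero_iff _, ?_, ?_, fun h => ?_⟩
  · rw [chT_eq_chTensor, hφ₁, chTensor_eq_zero_iff]
    exact chCoeffsVanish_of_odd _ (by decide)
  · rw [chT_eq_chTensor, hφ₂, chTensor_eq_zero_iff]
    exact chCoeffsVanish_of_odd _ (by decide)
  · have := ((chTensor_eq_zero_iff _).1 h).1 id Function.bijective_id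
    simp at this
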